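/- arXiv:2108.07890 — 5 statements merged into one kernel-verified Lean document; each statement's English description precedes it below -/
import Mathlib

section
/- For every integer n ≥ 3, ε_Δ(OP_n) = 0 if and only if n ≡ 0 (mod 3); that is, there exists a triangle decomposable maximal outerplanar graph of order n if and only if 3 divides n. -/
/-- A triangle on three distinct vertices, as a multiset of edges. -/
def IsTriangle {V : Type*} (t : Multiset (Sym2 V)) : Prop :=
  ∃ a b c : V, a ≠ b ∧ b ≠ c ∧ a ≠ c ∧ t = {s(a, b), s(b, c), s(a, c)}

/-- A multigraph (multiset of edges) is triangle decomposable if it is a sum of triangles. -/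
def TriDecomp {V : Type*} (E : Multiset (Sym2 V)) : Prop :=
  ∃ T : Multiset (Multiset (Sym2 V)), (∀ t ∈ T, IsTriangle t) ∧ T.sum = E

/-- The edge multiset of a simple graph on a finite vertex type. -/
noncomputable def edgeMS {V : Type*} [Fintype V] (G : SimpleGraph V) : Multiset (Sym2 V) :=
  G.edgeSet.toFinite.toFinset.val

/-- `ε_Δ(G)`: the least number of duplicated edges of `G` (a multiset of edges of `G`,
repetitions allowed) whose addition makes the edge multiset triangle decomposable. -/
noncomputable def epsDelta {V : Type*} [Fintype V] (G : SimpleGraph V) : ℕ :=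
  sInf {k | ∃ D : Multiset (Sym2 V), D.card = k ∧ (∀ e ∈ D, e ∈ G.edgeSet) ∧
    TriDecomp (edgeMS G + D)}

/-- The edge set of the simple-clique 2-tree construction on `Fin n`: start with the
triangle on `0,1,2`, and each vertex `k ≥ 3` is attached to the two vertices `a k, b k`. -/
def mopEdges (n : ℕ) (hn : 3 ≤ n) (a b : Fin n → Fin n) : Set (Sym2 (Fin n)) :=
  {e | e = s(⟨0, by omega⟩, ⟨1, by omega⟩) ∨ e = s(⟨1, by omega⟩, ⟨2, by omega⟩) ∨
       e = s(⟨0, by omega⟩, ⟨2, by omega⟩) ∨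
       ∃ k : Fin n, 3 ≤ (k : ℕ) ∧ (e = s(k, a k) ∨ e = s(k, b k))}

/-- `G` is a maximal outerplanar graph (equivalently, a simple-clique 2-tree):
it is built from a triangle by repeatedly adding a new vertex adjacent to exactly the two
endpoints of an existing edge, each edge being used as an attachment edge at most once. -/
def IsMOP {n : ℕ} (G : SimpleGraph (Fin n)) : Prop :=
  ∃ (hn : 3 ≤ n) (a b : Fin n → Fin n),
    (∀ k : Fin n, 3 ≤ (k : ℕ) → (a k : ℕ) < k ∧ (b k : ℕ) < k ∧ a k ≠ b k) ∧
    (∀ k : Fin n, 3 ≤ (k : ℕ) → s(a k, b k) ∈ mopEdges n hn a b) ∧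
    (∀ k l : Fin n, 3 ≤ (k : ℕ) → 3 ≤ (l : ℕ) → k ≠ l → s(a k, b k) ≠ s(a l, b l)) ∧
    G = SimpleGraph.fromEdgeSet (mopEdges n hn a b)

/-- `ε_Δ(OP_n) = min { ε_Δ(G) : G a maximal outerplanar graph of order n }`. -/
noncomputable def epsOP (n : ℕ) : ℕ :=
  sInf {m | ∃ G : SimpleGraph (Fin n), IsMOP G ∧ epsDelta G = m}

/-!
A maximal outerplanar graph of order `n` has `2n - 3` edges, while a sum of triangles has a
multiple of three edges; hence `3 ∣ n` is necessary. Duplicating the attachment edge of every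
added vertex turns its two spokes into a triangle, so `ε_Δ` is finite and vanishes exactly on
triangle decomposable graphs. For `n = 3m`, attach the vertices in blocks `3j, 3j+1, 3j+2` so that
the attachment edges of `3j+1` and `3j+2` are the two spokes of `3j`: the base triangle together
with the attachment triangles of the vertices `3j+1` and `3j+2` then partition the edge set.
-/

section TriDecomp
variable {V : Type*}

theorem IsTriangle.card_eq_three {t : Multiset (Sym2 V)} (h : IsTriangle t) : t.card = 3 := by
  obtain ⟨a, b, c, -, -, -, rfl⟩ := h
  rfl

theorem TriDecomp.three_dvd_card {E : Multiset (Sym2 V)} (h : TriDecomp E) : 3 ∣ E.card := by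
  obtain ⟨T, hT, rfl⟩ := h
  rw [← Multiset.join, Multiset.card_join]
  exact Multiset.dvd_sum fun k hk => by
    obtain ⟨t, ht, rfl⟩ := Multiset.mem_map.1 hk
    rw [(hT t ht).card_eq_three]

theorem IsTriangle.triDecomp {t : Multiset (Sym2 V)} (h : IsTriangle t) : TriDecomp t :=
  ⟨{t}, by simpa using h, Multiset.sum_singleton t⟩

theorem TriDecomp.zero : TriDecomp (0 : Multiset (Sym2 V)) :=
  ⟨0, by simp, Multiset.sum_zero⟩

theorem TriDecomp.add {E F : Multiset (Sym2 V)} (hE : TriDecomp E) (hF : TriDecomp F) :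
    TriDecomp (E + F) := by
  obtain ⟨T, hT, rfl⟩ := hE
  obtain ⟨U, hU, rfl⟩ := hF
  exact ⟨T + U, by simpa [or_imp, forall_and] using ⟨hT, hU⟩, Multiset.sum_add T U⟩

theorem TriDecomp.sum {ι : Type*} {s : Finset ι} {E : ι → Multiset (Sym2 V)}
    (h : ∀ i ∈ s, TriDecomp (E i)) : TriDecomp (∑ i ∈ s, E i) :=
  Finset.sum_induction E TriDecomp (fun _ _ => TriDecomp.add) TriDecomp.zero h

end TriDecomp

section TwoTree
variable {n : ℕ}

def baseTriangle (hn : 3 ≤ n) : Multiset (Sym2 (Fin n)) :=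
  {s(⟨0, by omega⟩, ⟨1, by omega⟩), s(⟨1, by omega⟩, ⟨2, by omega⟩),
    s(⟨0, by omega⟩, ⟨2, by omega⟩)}

def newVertices (n : ℕ) : Finset (Fin n) := {k | 3 ≤ (k : ℕ)}

def spokes (a b : Fin n → Fin n) (k : Fin n) : Multiset (Sym2 (Fin n)) := {s(k, a k), s(k, b k)}

theorem mem_newVertices {k : Fin n} : k ∈ newVertices n ↔ 3 ≤ (k : ℕ) := by
  simp [newVertices]

theorem card_newVertices : (newVertices n).card = n - 3 := by
  have h := Finset.card_filter_add_card_filter_not (s := Finset.univ)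
    (fun k : Fin n => (k : ℕ) < 3)
  rw [Fin.card_filter_val_lt, Finset.card_univ, Fintype.card_fin] at h
  simp only [not_lt] at h
  unfold newVertices
  omega

theorem isTriangle_baseTriangle (hn : 3 ≤ n) : IsTriangle (baseTriangle hn) :=
  ⟨_, _, _, by simp [Fin.ext_iff], by simp [Fin.ext_iff], by simp [Fin.ext_iff], rfl⟩

theorem isTriangle_spokes_add {a b : Fin n → Fin n} {k : Fin n}
    (hk : (a k : ℕ) < k ∧ (b k : ℕ) < k ∧ a k ≠ b k) :
    IsTriangle (spokes a b k + {s(a k, b k)}) := by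
  obtain ⟨ha, hb, hab⟩ := hk
  refine ⟨k, a k, b k, fun h => ?_, hab, fun h => ?_, ?_⟩
  · exact ha.ne (congrArg Fin.val h).symm
  · exact hb.ne (congrArg Fin.val h).symm
  · simpa [spokes] using Multiset.pair_comm _ _

theorem sup_eq_of_mem_spokes {a b : Fin n → Fin n} {k : Fin n} {e : Sym2 (Fin n)}
    (hk : (a k : ℕ) < k ∧ (b k : ℕ) < k ∧ a k ≠ b k) (he : e ∈ spokes a b k) : e.sup = k := by
  simp only [spokes, Multiset.insert_eq_cons, Multiset.mem_cons, Multiset.mem_singleton] at he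
  rcases he with rfl | rfl
  · exact sup_of_le_left hk.1.le
  · exact sup_of_le_left hk.2.1.le

theorem nodup_sum_spokes {a b : Fin n → Fin n} {s : Finset (Fin n)}
    (hs : ∀ k ∈ s, (a k : ℕ) < k ∧ (b k : ℕ) < k ∧ a k ≠ b k) :
    (∑ k ∈ s, spokes a b k).Nodup := by
  refine Multiset.nodup_bind.2 ⟨fun k hk => ?_, s.nodup.pairwise fun k hk l hl hkl => ?_⟩
  · rw [spokes, Multiset.insert_eq_cons, Multiset.nodup_cons, Multiset.mem_singleton,
      Sym2.congr_right]
    exact ⟨(hs k hk).2.2, Multiset.nodup_singleton _⟩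
  · exact Multiset.disjoint_left.2 fun hek hel =>
      hkl ((sup_eq_of_mem_spokes (hs k hk) hek).symm.trans (sup_eq_of_mem_spokes (hs l hl) hel))

variable (hn : 3 ≤ n) {a b : Fin n → Fin n}

theorem nodup_baseTriangle_add_sum_spokes
    (hab : ∀ k : Fin n, 3 ≤ (k : ℕ) → (a k : ℕ) < k ∧ (b k : ℕ) < k ∧ a k ≠ b k) :
    (baseTriangle hn + ∑ k ∈ newVertices n, spokes a b k).Nodup := by
  have hnew : ∀ k ∈ newVertices n, (a k : ℕ) < k ∧ (b k : ℕ) < k ∧ a k ≠ b k :=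
    fun k hk => hab k (mem_newVertices.1 hk)
  refine Multiset.nodup_add.2
    ⟨?_, nodup_sum_spokes hnew, Multiset.disjoint_left.2 fun he he' => ?_⟩
  · simp [baseTriangle, Fin.ext_iff]
  · obtain ⟨k, hk, hek⟩ := Multiset.mem_sum.1 he'
    have hsup := congrArg Fin.val (sup_eq_of_mem_spokes (hnew k hk) hek)
    have hk3 := mem_newVertices.1 hk
    simp only [baseTriangle, Multiset.insert_eq_cons, Multiset.mem_cons,
      Multiset.mem_singleton] at he
    rcases he with rfl | rfl | rfl <;> simp at hsup <;> omega

theorem mem_baseTriangle_add_sum_spokes {e : Sym2 (Fin n)} :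
    e ∈ baseTriangle hn + ∑ k ∈ newVertices n, spokes a b k ↔ e ∈ mopEdges n hn a b := by
  simp [baseTriangle, spokes, mopEdges, mem_newVertices]

theorem not_isDiag_of_mem_mopEdges
    (hab : ∀ k : Fin n, 3 ≤ (k : ℕ) → (a k : ℕ) < k ∧ (b k : ℕ) < k ∧ a k ≠ b k)
    {e : Sym2 (Fin n)} (he : e ∈ mopEdges n hn a b) : ¬e.IsDiag := by
  rcases he with rfl | rfl | rfl | ⟨k, hk, rfl | rfl⟩ <;> rw [Sym2.mk_isDiag_iff]
  · simp [Fin.ext_iff]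
  · simp [Fin.ext_iff]
  · simp [Fin.ext_iff]
  · exact fun h => (hab k hk).1.ne (congrArg Fin.val h).symm
  · exact fun h => (hab k hk).2.1.ne (congrArg Fin.val h).symm

theorem edgeMS_fromEdgeSet_mopEdges
    (hab : ∀ k : Fin n, 3 ≤ (k : ℕ) → (a k : ℕ) < k ∧ (b k : ℕ) < k ∧ a k ≠ b k) :
    edgeMS (SimpleGraph.fromEdgeSet (mopEdges n hn a b)) =
      baseTriangle hn + ∑ k ∈ newVertices n, spokes a b k := by
  unfold edgeMS
  refine (Multiset.Nodup.ext (Finset.nodup _) (nodup_baseTriangle_add_sum_spokes hn hab)).2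
    fun e => ?_
  rw [Finset.mem_val, Set.Finite.mem_toFinset, SimpleGraph.edgeSet_fromEdgeSet,
    Set.mem_sdiff, Sym2.mem_diagSet, mem_baseTriangle_add_sum_spokes]
  exact and_iff_left_of_imp (not_isDiag_of_mem_mopEdges hn hab)

theorem card_baseTriangle_add_sum_spokes :
    (baseTriangle hn + ∑ k ∈ newVertices n, spokes a b k).card = 2 * n - 3 := by
  rw [Multiset.card_add, Multiset.card_sum]
  simp only [baseTriangle, spokes, Multiset.insert_eq_cons, Multiset.card_cons,
    Multiset.card_singleton, Finset.sum_const, card_newVertices, smul_eq_mul]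
  omega

theorem triDecomp_baseTriangle_add_sum {s : Finset (Fin n)}
    (hs : ∀ k ∈ s, (a k : ℕ) < k ∧ (b k : ℕ) < k ∧ a k ≠ b k) :
    TriDecomp (baseTriangle hn + ∑ k ∈ s, (spokes a b k + {s(a k, b k)})) :=
  (isTriangle_baseTriangle hn).triDecomp.add
    (TriDecomp.sum fun k hk => (isTriangle_spokes_add (hs k hk)).triDecomp)

theorem IsMOP.three_dvd_of_triDecomp {G : SimpleGraph (Fin n)} (hG : IsMOP G)
    (hT : TriDecomp (edgeMS G)) : 3 ∣ n := by
  obtain ⟨hn, a, b, hab, -, -, rfl⟩ := hG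
  have h := hT.three_dvd_card
  rw [edgeMS_fromEdgeSet_mopEdges hn hab, card_baseTriangle_add_sum_spokes] at h
  omega

theorem IsMOP.exists_triDecomp_edgeMS_add {G : SimpleGraph (Fin n)} (hG : IsMOP G) :
    ∃ D : Multiset (Sym2 (Fin n)), (∀ e ∈ D, e ∈ G.edgeSet) ∧ TriDecomp (edgeMS G + D) := by
  obtain ⟨hn, a, b, hab, hmem, -, rfl⟩ := hG
  refine ⟨∑ k ∈ newVertices n, {s(a k, b k)}, fun e he => ?_, ?_⟩
  · obtain ⟨k, hk, rfl⟩ : ∃ k ∈ newVertices n, e = s(a k, b k) := by simpa using he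
    have hk := mem_newVertices.1 hk
    rw [SimpleGraph.edgeSet_fromEdgeSet]
    exact ⟨hmem k hk, by simpa using (hab k hk).2.2⟩
  · rw [edgeMS_fromEdgeSet_mopEdges hn hab, add_assoc, ← Finset.sum_add_distrib]
    exact triDecomp_baseTriangle_add_sum hn fun k hk => hab k (mem_newVertices.1 hk)

theorem IsMOP.epsDelta_eq_zero_iff {G : SimpleGraph (Fin n)} (hG : IsMOP G) :
    epsDelta G = 0 ↔ TriDecomp (edgeMS G) := by
  obtain ⟨D, hD, hT⟩ := hG.exists_triDecomp_edgeMS_add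
  rw [epsDelta, Nat.sInf_eq_zero]
  constructor
  · rintro (⟨D', hcard, -, hdec⟩ | hempty)
    · rwa [Multiset.card_eq_zero.1 hcard, add_zero] at hdec
    · exact absurd hempty (Set.nonempty_iff_ne_empty.1 ⟨_, D, rfl, hD, hT⟩)
  · exact fun h => Or.inl ⟨0, rfl, by simp, by rwa [add_zero]⟩

end TwoTree

section Blocks
variable {n : ℕ}

-- Vertex `3j` is attached to the edge `{3j-3, 3j-2}`, `3j+1` to `{3j, 3j-3}`, `3j+2` to `{3j, 3j-2}`.
def blockA (n : ℕ) (k : Fin n) : Fin n :=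
  ⟨if (k : ℕ) % 3 = 0 then k - 3 else if (k : ℕ) % 3 = 1 then k - 1 else k - 2, by
    split_ifs <;> omega⟩

def blockB (n : ℕ) (k : Fin n) : Fin n :=
  ⟨if (k : ℕ) % 3 = 0 then k - 2 else k - 4, by split_ifs <;> omega⟩

theorem blockA_lt_and_blockB_lt_and_ne (k : Fin n) (hk : 3 ≤ (k : ℕ)) :
    (blockA n k : ℕ) < k ∧ (blockB n k : ℕ) < k ∧ blockA n k ≠ blockB n k := by
  simp only [blockA, blockB, ne_eq, Fin.ext_iff]
  split_ifs <;> omega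

theorem eq_of_block_attachEdge_eq {k l : Fin n} (hk : 3 ≤ (k : ℕ)) (hl : 3 ≤ (l : ℕ))
    (h : s(blockA n k, blockB n k) = s(blockA n l, blockB n l)) : k = l := by
  simp only [blockA, blockB, Sym2.eq_iff, Fin.ext_iff] at h ⊢
  split_ifs at h <;> omega

theorem block_attachEdge_mem (hn : 3 ≤ n) (k : Fin n) (hk : 3 ≤ (k : ℕ)) :
    s(blockA n k, blockB n k) ∈ mopEdges n hn (blockA n) (blockB n) := by
  rcases Nat.lt_or_ge (k : ℕ) 4 with h3 | h4
  · left
    simp only [blockA, blockB, Sym2.eq_iff, Fin.ext_iff]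
    split_ifs <;> omega
  · refine Or.inr (Or.inr (Or.inr ⟨⟨if (k : ℕ) % 3 = 1 then k - 1 else k - 2, by
      split_ifs <;> omega⟩, by split_ifs <;> simp <;> omega, ?_⟩))
    simp only [blockA, blockB, Sym2.eq_iff, Fin.ext_iff]
    split_ifs <;> omega

theorem block_isMOP (hn : 3 ≤ n) :
    IsMOP (SimpleGraph.fromEdgeSet (mopEdges n hn (blockA n) (blockB n))) :=
  ⟨hn, blockA n, blockB n, blockA_lt_and_blockB_lt_and_ne, block_attachEdge_mem hn,
    fun _ _ hk hl hkl h => hkl (eq_of_block_attachEdge_eq hk hl h), rfl⟩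

theorem sum_spokes_block_eq (h3 : 3 ∣ n) :
    ∑ k ∈ newVertices n with k.val % 3 = 0, spokes (blockA n) (blockB n) k =
      ∑ k ∈ newVertices n with ¬k.val % 3 = 0, {s(blockA n k, blockB n k)} := by
  have hnew {k} (hk : k ∈ newVertices n) : 3 ≤ (k : ℕ) := mem_newVertices.1 hk
  have hnodup : (∑ k ∈ newVertices n with ¬k.val % 3 = 0,
      ({s(blockA n k, blockB n k)} : Multiset (Sym2 (Fin n)))).Nodup :=
    Multiset.nodup_bind.2 ⟨fun _ _ => Multiset.nodup_singleton _,
      (Finset.nodup _).pairwise fun k hk l hl hkl => Multiset.disjoint_singleton.2 fun h =>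
        hkl (eq_of_block_attachEdge_eq (hnew (Finset.mem_filter.1 hk).1)
          (hnew (Finset.mem_filter.1 hl).1) (Multiset.mem_singleton.1 h).symm)⟩
  refine (Multiset.Nodup.ext (nodup_sum_spokes fun k hk => blockA_lt_and_blockB_lt_and_ne k
    (hnew (Finset.mem_filter.1 hk).1)) hnodup).2 fun e => ?_
  simp only [Multiset.mem_sum, Finset.mem_filter, mem_newVertices, spokes,
    Multiset.insert_eq_cons, Multiset.mem_cons, Multiset.mem_singleton]
  constructor
  · rintro ⟨k, ⟨hk3, hk0⟩, rfl | rfl⟩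
    · refine ⟨⟨k + 1, by omega⟩, ⟨by simp; omega, by simp; omega⟩, ?_⟩
      simp only [blockA, blockB, Sym2.eq_iff, Fin.ext_iff]
      split_ifs <;> omega
    · refine ⟨⟨k + 2, by omega⟩, ⟨by simp; omega, by simp; omega⟩, ?_⟩
      simp only [blockA, blockB, Sym2.eq_iff, Fin.ext_iff]
      split_ifs <;> omega
  · rintro ⟨k, ⟨hk3, hk0⟩, rfl⟩
    refine ⟨⟨k - k % 3, by omega⟩, ⟨by simp; omega, by simp; omega⟩, ?_⟩
    simp only [blockA, blockB, Sym2.eq_iff, Fin.ext_iff]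
    split_ifs <;> omega

theorem block_triDecomp (hn : 3 ≤ n) (h3 : 3 ∣ n) :
    TriDecomp (edgeMS (SimpleGraph.fromEdgeSet (mopEdges n hn (blockA n) (blockB n)))) := by
  rw [edgeMS_fromEdgeSet_mopEdges hn blockA_lt_and_blockB_lt_and_ne,
    ← Finset.sum_filter_not_add_sum_filter _ (fun k : Fin n => k.val % 3 = 0),
    sum_spokes_block_eq h3, ← Finset.sum_add_distrib]
  exact triDecomp_baseTriangle_add_sum hn fun k hk =>
    blockA_lt_and_blockB_lt_and_ne k (mem_newVertices.1 (Finset.mem_filter.1 hk).1)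

end Blocks

/-- For every `n ≥ 3`, `ε_Δ(OP_n) = 0` iff `n ≡ 0 (mod 3)`; that is, a triangle
decomposable maximal outerplanar graph of order `n` exists iff `3 ∣ n`. -/
theorem eps_OP_eq_zero_iff (n : ℕ) (hn : 3 ≤ n) :
    (epsOP n = 0 ↔ n % 3 = 0) ∧
    ((∃ G : SimpleGraph (Fin n), IsMOP G ∧ TriDecomp (edgeMS G)) ↔ 3 ∣ n) := by
  have hexists : (∃ G : SimpleGraph (Fin n), IsMOP G ∧ TriDecomp (edgeMS G)) ↔ 3 ∣ n :=
    ⟨fun ⟨_, hG, hT⟩ => hG.three_dvd_of_triDecomp hT,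
      fun h3 => ⟨_, block_isMOP hn, block_triDecomp hn h3⟩⟩
  refine ⟨?_, hexists⟩
  rw [epsOP, Nat.sInf_eq_zero, ← Nat.dvd_iff_mod_eq_zero, ← hexists]
  constructor
  · rintro (⟨G, hG, h0⟩ | hempty)
    · exact ⟨G, hG, hG.epsDelta_eq_zero_iff.1 h0⟩
    · exact absurd hempty (Set.nonempty_iff_ne_empty.1 ⟨_, _, block_isMOP hn, rfl⟩)
  · rintro ⟨G, hG, hT⟩
    exact Or.inl ⟨G, hG, hG.epsDelta_eq_zero_iff.2 hT⟩
end

section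
/- For every maximal outerplanar graph G of order n ≥ 3, ε_Δ(G) ≤ n − 3; that is, G can always be made triangle decomposable by duplicating at most n − 3 of its edges. -/
lemma sym2_high_eq {n : ℕ} {k l x y : Fin n} (hx : (x:ℕ) < k) (hy : (y:ℕ) < l)
    (h : s(k, x) = s(l, y)) : k = l ∧ x = y := by
  rw [Sym2.eq_iff] at h
  rcases h with ⟨rfl, rfl⟩ | ⟨rfl, rfl⟩
  · exact ⟨rfl, rfl⟩
  · omega

/-- Every maximal outerplanar graph of order `n ≥ 3` can be made triangle decomposable by
duplicating at most `n - 3` of its edges. -/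
theorem epsDelta_le_of_isMOP (n : ℕ) (hn : 3 ≤ n) (G : SimpleGraph (Fin n))
    (hG : IsMOP G) : epsDelta G ≤ n - 3 := by
  classical
  obtain ⟨hn', a, b, hab, hmem, -, rfl⟩ := hG
  set v0 : Fin n := ⟨0, by omega⟩ with hv0
  set v1 : Fin n := ⟨1, by omega⟩ with hv1
  set v2 : Fin n := ⟨2, by omega⟩ with hv2
  set F : Finset (Fin n) := Finset.univ.filter (fun k : Fin n => 3 ≤ (k:ℕ)) with hF
  have hmemF : ∀ k : Fin n, k ∈ F ↔ 3 ≤ (k:ℕ) := by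
    intro k; simp [hF]
  have haklt : ∀ k : Fin n, 3 ≤ (k:ℕ) → (a k : ℕ) < k := fun k hk => (hab k hk).1
  have hbklt : ∀ k : Fin n, 3 ≤ (k:ℕ) → (b k : ℕ) < k := fun k hk => (hab k hk).2.1
  have habne : ∀ k : Fin n, 3 ≤ (k:ℕ) → a k ≠ b k := fun k hk => (hab k hk).2.2
  -- the explicit edge multiset
  set M : Multiset (Sym2 (Fin n)) :=
    ({s(v0, v1), s(v1, v2), s(v0, v2)} : Multiset (Sym2 (Fin n))) +
      F.val.bind (fun k => {s(k, a k), s(k, b k)}) with hM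
  set D : Multiset (Sym2 (Fin n)) := F.val.map (fun k => s(a k, b k)) with hD
  -- cardinality of F
  have hcardF : F.card = n - 3 := by
    have himg : F.image Fin.val = Finset.Ico 3 n := by
      ext m
      simp only [Finset.mem_image, Finset.mem_Ico, hF, Finset.mem_filter, Finset.mem_univ,
        true_and]
      constructor
      · rintro ⟨k, hk, rfl⟩; exact ⟨hk, k.isLt⟩
      · rintro ⟨h3, hlt⟩; exact ⟨⟨m, hlt⟩, h3, rfl⟩
    rw [← Finset.card_image_of_injective _ Fin.val_injective, himg, Nat.card_Ico]
  -- membership in M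
  have hMmem : ∀ e, e ∈ M ↔ e ∈ mopEdges n hn' a b := by
    intro e
    simp only [hM, Multiset.mem_add, Multiset.mem_bind, Multiset.insert_eq_cons,
      Multiset.mem_cons, Multiset.mem_singleton, mopEdges, Set.mem_setOf_eq, Finset.mem_val,
      hmemF]
    constructor
    · rintro ((h | h | h) | ⟨k, hk, h | h⟩)
      · exact Or.inl h
      · exact Or.inr (Or.inl h)
      · exact Or.inr (Or.inr (Or.inl h))
      · exact Or.inr (Or.inr (Or.inr ⟨k, hk, Or.inl h⟩))
      · exact Or.inr (Or.inr (Or.inr ⟨k, hk, Or.inr h⟩))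
    · rintro (h | h | h | ⟨k, hk, h | h⟩)
      · exact Or.inl (Or.inl h)
      · exact Or.inl (Or.inr (Or.inl h))
      · exact Or.inl (Or.inr (Or.inr h))
      · exact Or.inr ⟨k, hk, Or.inl h⟩
      · exact Or.inr ⟨k, hk, Or.inr h⟩
  -- no element of mopEdges is diagonal
  have hnd : ∀ e ∈ mopEdges n hn' a b, ¬ e.IsDiag := by
    rintro e (rfl | rfl | rfl | ⟨k, hk, rfl | rfl⟩)
    · simp only [Sym2.isDiag_iff_proj_eq, Fin.ext_iff]; omega
    · simp only [Sym2.isDiag_iff_proj_eq, Fin.ext_iff]; omega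
    · simp only [Sym2.isDiag_iff_proj_eq, Fin.ext_iff]; omega
    · have := haklt k hk; simp only [Sym2.isDiag_iff_proj_eq, Fin.ext_iff]; omega
    · have := hbklt k hk; simp only [Sym2.isDiag_iff_proj_eq, Fin.ext_iff]; omega
  -- M has no duplicates
  have hMnd : M.Nodup := by
    rw [hM, Multiset.nodup_add]
    refine ⟨?_, ?_, ?_⟩
    · simp only [Multiset.insert_eq_cons, Multiset.nodup_cons, Multiset.mem_cons,
        Multiset.mem_singleton, Multiset.nodup_singleton, and_true, not_or]
      refine ⟨⟨?_, ?_⟩, ?_⟩ <;>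
        simp [Sym2.eq_iff, hv0, hv1, hv2, Fin.ext_iff]
    · rw [Multiset.nodup_bind]
      constructor
      · intro k hk
        rw [Finset.mem_val, hmemF] at hk
        simp only [Multiset.insert_eq_cons, Multiset.nodup_cons, Multiset.mem_singleton,
          Multiset.nodup_singleton, and_true]
        intro h
        exact habne k hk ((sym2_high_eq (haklt k hk) (hbklt k hk) h).2)
      · refine Multiset.Nodup.pairwise ?_ F.nodup
        intro k hk l hl hkl
        rw [Finset.mem_val, hmemF] at hk hl
        simp only [Function.onFun]
        rw [Multiset.disjoint_left]
        intro e he he'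
        simp only [Multiset.insert_eq_cons, Multiset.mem_cons, Multiset.mem_singleton] at he he'
        have : k = l := by
          rcases he with rfl | rfl <;> rcases he' with h | h <;>
            exact (sym2_high_eq (by first | exact haklt k hk | exact hbklt k hk)
              (by first | exact haklt l hl | exact hbklt l hl) h).1
        exact hkl this
    · rw [Multiset.disjoint_left]
      intro e he he'
      simp only [Multiset.insert_eq_cons, Multiset.mem_cons, Multiset.mem_singleton] at he
      rw [Multiset.mem_bind] at he'
      obtain ⟨k, hk, he'⟩ := he'
      rw [Finset.mem_val, hmemF] at hk
      simp only [Multiset.insert_eq_cons, Multiset.mem_cons, Multiset.mem_singleton] at he'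
      have hlt : ∀ x : Fin n, (x:ℕ) < k → e ≠ s(k, x) := by
        intro x hx h
        rcases he with rfl | rfl | rfl <;>
          · rw [Sym2.eq_iff] at h
            simp only [Fin.ext_iff, hv0, hv1, hv2] at h
            omega
      rcases he' with rfl | rfl
      · exact hlt _ (haklt k hk) rfl
      · exact hlt _ (hbklt k hk) rfl
  -- edgeMS equals M
  have hedge : edgeMS (SimpleGraph.fromEdgeSet (mopEdges n hn' a b)) = M := by
    have h1 : (edgeMS (SimpleGraph.fromEdgeSet (mopEdges n hn' a b))).Nodup :=
      (SimpleGraph.fromEdgeSet (mopEdges n hn' a b)).edgeSet.toFinite.toFinset.nodup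
    refine (Multiset.Nodup.ext h1 hMnd).2 ?_
    intro e
    rw [edgeMS, Finset.mem_val, Set.Finite.mem_toFinset, SimpleGraph.edgeSet_fromEdgeSet,
      Set.mem_diff, hMmem e]
    constructor
    · rintro ⟨h, -⟩; exact h
    · intro h; exact ⟨h, hnd e h⟩
  -- main bound
  rw [epsDelta]
  apply Nat.sInf_le
  refine ⟨D, ?_, ?_, ?_⟩
  · rw [hD, Multiset.card_map]; exact hcardF
  · intro e he
    rw [hD, Multiset.mem_map] at he
    obtain ⟨k, hk, rfl⟩ := he
    rw [Finset.mem_val, hmemF] at hk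
    rw [SimpleGraph.edgeSet_fromEdgeSet, Set.mem_diff]
    exact ⟨hmem k hk, hnd _ (hmem k hk)⟩
  · rw [hedge]
    refine ⟨(({s(v0, v1), s(v1, v2), s(v0, v2)} : Multiset (Sym2 (Fin n))) ::ₘ
      F.val.map (fun k => ({s(a k, k), s(k, b k), s(a k, b k)} : Multiset (Sym2 (Fin n))))),
      ?_, ?_⟩
    · intro t ht
      rw [Multiset.mem_cons] at ht
      rcases ht with rfl | ht
      · exact ⟨v0, v1, v2, by simp [hv0, hv1, hv2, Fin.ext_iff],
          by simp [hv1, hv2, Fin.ext_iff], by simp [hv0, hv2, Fin.ext_iff], rfl⟩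
      · rw [Multiset.mem_map] at ht
        obtain ⟨k, hk, rfl⟩ := ht
        rw [Finset.mem_val, hmemF] at hk
        refine ⟨a k, k, b k, ?_, ?_, habne k hk, rfl⟩
        · intro h; have := haklt k hk; rw [h] at this; omega
        · intro h; have := hbklt k hk; rw [← h] at this; omega
    · rw [Multiset.sum_cons, hM, hD, add_assoc]
      congr 1
      clear hedge hMnd hMmem hcardF hnd hmem hab hD hM
      clear D M
      have key : ∀ s : Multiset (Fin n),
          (s.map (fun k => ({s(a k, k), s(k, b k), s(a k, b k)} : Multiset (Sym2 (Fin n))))).sum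
            = s.bind (fun k => {s(k, a k), s(k, b k)}) + s.map (fun k => s(a k, b k)) := by
        intro s
        induction s using Multiset.induction with
        | empty => simp
        | cons k s ih =>
          simp only [Multiset.map_cons, Multiset.cons_bind, Multiset.sum_cons, ih]
          rw [show s(a k, k) = s(k, a k) from Sym2.eq_swap,
            show (s(a k, b k) ::ₘ Multiset.map (fun k => s(a k, b k)) s)
              = {s(a k, b k)} + Multiset.map (fun k => s(a k, b k)) s
              from (Multiset.singleton_add _ _).symm,
            show ({s(k, a k), s(k, b k), s(a k, b k)} : Multiset (Sym2 (Fin n)))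
              = {s(k, a k), s(k, b k)} + {s(a k, b k)} from rfl]
          abel
      exact key F.val
end

section
/- Let n ≥ 4 and let F_n be the fan graph on vertices v_1, …, v_n whose edges are the cycle v_1v_2⋯v_nv_1 together with the chords v_1v_j for 3 ≤ j ≤ n − 1. Then ε_Δ(F_n) = n − 3: duplicating each of the n − 3 chords yields a triangle decomposable multigraph, and no multiset of fewer than n − 3 duplicated edges of F_n yields a triangle decomposable multigraph. -/
/-- The fan graph `F_n` on vertices `v_1, …, v_n` (here zero-indexed as `0, …, n-1`):
the cycle `v_1 v_2 ⋯ v_n v_1` together with the chords `v_1 v_j` for `3 ≤ j ≤ n - 1`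
(zero-indexed: `s(0, j)` for `2 ≤ j ≤ n - 2`). -/
def fanGraph (n : ℕ) (hn : 4 ≤ n) : SimpleGraph (Fin n) :=
  SimpleGraph.fromEdgeSet
    {e | (∃ i : ℕ, ∃ _h : i + 1 < n, e = s(⟨i, by omega⟩, ⟨i + 1, by omega⟩)) ∨
         e = s(⟨n - 1, by omega⟩, ⟨0, by omega⟩) ∨
         (∃ j : ℕ, ∃ _h1 : 2 ≤ j, ∃ _h2 : j ≤ n - 2, e = s(⟨0, by omega⟩, ⟨j, by omega⟩))}

/-!
Vertex `0` is adjacent to every other vertex and the remaining vertices form the path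
`1, 2, …, n - 1`, so every triangle of `F_n` passes through `0` and has exactly two of its three
edges at `0`. If `E(F_n) + D` is a sum of `t` triangles, counting all edges gives
`3t = (2n - 3) + |D|` and counting edges at `0` gives `2t = (n - 1) + d₀` with `d₀ ≤ |D|`,
whence `|D| ≥ n - 3`. Conversely the `n - 2` triangles `0 i (i+1)` for `1 ≤ i ≤ n - 2` use every
chord twice and every other edge once.
-/

lemma Multiset.countP_sum {α : Type*} (p : α → Prop) [DecidablePred p]
    (T : Multiset (Multiset α)) : T.sum.countP p = (T.map (countP p)).sum :=
  map_multiset_sum (countPAddMonoidHom p) T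

lemma Multiset.sum_map_singleton' {α β : Type*} (s : Multiset α) (f : α → β) :
    (s.map fun a => ({f a} : Multiset β)).sum = s.map f :=
  bind_singleton s f

lemma IsTriangle.card_eq {V : Type*} {t : Multiset (Sym2 V)} (ht : IsTriangle t) :
    t.card = 3 := by
  obtain ⟨a, b, c, -, -, -, rfl⟩ := ht
  rfl

lemma countP_mem_triangle {V : Type*} [DecidableEq V] {a b c v : V} (hab : a ≠ b)
    (hbc : b ≠ c) (hac : a ≠ c) (hv : v = a ∨ v = b ∨ v = c) :
    ({s(a, b), s(b, c), s(a, c)} : Multiset (Sym2 V)).countP (v ∈ ·) = 2 := by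
  rcases hv with rfl | rfl | rfl <;>
    simp [Multiset.countP_eq_card_filter, Multiset.filter_singleton, hab, hbc, hac, hab.symm,
      hbc.symm, hac.symm]

theorem TriDecomp.two_mul_card_eq_three_mul_countP {V : Type*} [DecidableEq V]
    {G : SimpleGraph V} {E : Multiset (Sym2 V)} {v : V} (hE : TriDecomp E)
    (hEG : ∀ e ∈ E, e ∈ G.edgeSet)
    (hv : ∀ ⦃a b c⦄, G.Adj a b → G.Adj b c → G.Adj a c → v = a ∨ v = b ∨ v = c) :
    2 * E.card = 3 * E.countP (v ∈ ·) := by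
  obtain ⟨T, hT, rfl⟩ := hE
  have hcard (t) (ht : t ∈ T) : t.card = 3 := (hT t ht).card_eq
  have hcount (t) (ht : t ∈ T) : t.countP (v ∈ ·) = 2 := by
    obtain ⟨a, b, c, hab, hbc, hac, rfl⟩ := hT t ht
    have hadj (x y : V) (h : s(x, y) ∈ ({s(a, b), s(b, c), s(a, c)} : Multiset _)) :
        G.Adj x y :=
      hEG _ (Multiset.mem_join.2 ⟨_, ht, h⟩)
    exact countP_mem_triangle hab hbc hac
      (hv (hadj a b (by simp)) (hadj b c (by simp)) (hadj a c (by simp)))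
  rw [← Multiset.join, Multiset.card_join, Multiset.join, Multiset.countP_sum,
    Multiset.map_congr rfl hcard, Multiset.map_congr rfl hcount]
  simp only [Multiset.map_const', Multiset.sum_replicate, smul_eq_mul]
  ring

lemma mem_edgeMS {V : Type*} [Fintype V] {G : SimpleGraph V} {e : Sym2 V} :
    e ∈ edgeMS G ↔ e ∈ G.edgeSet :=
  Set.Finite.mem_toFinset _

lemma nodup_edgeMS {V : Type*} [Fintype V] (G : SimpleGraph V) : (edgeMS G).Nodup :=
  Finset.nodup _

lemma epsDelta_eq_of_forall_le_card {V : Type*} [Fintype V] {G : SimpleGraph V} {k : ℕ}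
    {D₀ : Multiset (Sym2 V)} (hcard : D₀.card = k) (hD₀ : ∀ e ∈ D₀, e ∈ G.edgeSet)
    (hdec : TriDecomp (edgeMS G + D₀))
    (hmin : ∀ D : Multiset (Sym2 V), (∀ e ∈ D, e ∈ G.edgeSet) → TriDecomp (edgeMS G + D) →
      k ≤ D.card) :
    epsDelta G = k :=
  IsLeast.csInf_eq ⟨⟨D₀, hcard, hD₀, hdec⟩, by rintro _ ⟨D, rfl, hD, h⟩; exact hmin D hD h⟩

lemma fanGraph_adj {n : ℕ} {hn : 4 ≤ n} {a b : Fin n} :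
    (fanGraph n hn).Adj a b ↔
      a ≠ b ∧ (a.val = 0 ∨ b.val = 0 ∨ a.val + 1 = b.val ∨ b.val + 1 = a.val) := by
  simp only [fanGraph, SimpleGraph.fromEdgeSet_adj, Set.mem_ofPred_eq, Sym2.eq_iff,
    Fin.ext_iff]
  constructor
  · rintro ⟨⟨i, hi, h⟩ | h | ⟨j, hj1, hj2, h⟩, hne⟩ <;> exact ⟨hne, by omega⟩
  · rintro ⟨hne, h⟩
    refine ⟨?_, hne⟩
    have := a.isLt
    have := b.isLt
    by_cases hcyc : a.val + 1 = b.val ∨ b.val + 1 = a.val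
    · exact Or.inl ⟨min a.val b.val, by omega, by omega⟩
    by_cases hwrap : a.val + b.val = n - 1
    · exact Or.inr (Or.inl (by omega))
    · exact Or.inr (Or.inr ⟨a.val + b.val, by omega, by omega, by omega⟩)

open Fin.NatCast

section Fan

variable (n : ℕ) [NeZero n]

def fanSpokes : Multiset (Sym2 (Fin n)) :=
  (Multiset.range (n - 1)).map fun j => s(0, ((j + 1 : ℕ) : Fin n))

def fanRim : Multiset (Sym2 (Fin n)) :=
  (Multiset.range (n - 2)).map fun i => s(((i + 1 : ℕ) : Fin n), ((i + 2 : ℕ) : Fin n))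

def fanChords : Multiset (Sym2 (Fin n)) :=
  (Multiset.range (n - 3)).map fun j => s(0, ((j + 2 : ℕ) : Fin n))

def fanTriangle (i : ℕ) : Multiset (Sym2 (Fin n)) :=
  {s(0, ((i + 1 : ℕ) : Fin n)), s(((i + 1 : ℕ) : Fin n), ((i + 2 : ℕ) : Fin n)),
    s(0, ((i + 2 : ℕ) : Fin n))}

variable {n}

lemma zero_mem_of_mem_fanSpokes {e : Sym2 (Fin n)} (he : e ∈ fanSpokes n) : 0 ∈ e := by
  obtain ⟨j, -, rfl⟩ := Multiset.mem_map.1 he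
  exact Sym2.mem_mk_left _ _

lemma zero_notMem_of_mem_fanRim {e : Sym2 (Fin n)} (he : e ∈ fanRim n) : 0 ∉ e := by
  obtain ⟨i, hi, rfl⟩ := Multiset.mem_map.1 he
  rw [Multiset.mem_range] at hi
  simp only [Sym2.mem_iff, Fin.ext_iff, Fin.val_natCast, Fin.val_zero]
  simp (disch := omega) only [Nat.mod_eq_of_lt]
  omega

lemma nodup_fanSpokes_add_fanRim : (fanSpokes n + fanRim n).Nodup := by
  refine Multiset.nodup_add.2 ⟨?_, ?_, Multiset.disjoint_left.2 fun hs hr =>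
    zero_notMem_of_mem_fanRim hr (zero_mem_of_mem_fanSpokes hs)⟩
  all_goals
    refine (Multiset.nodup_range _).map_on fun i hi j hj h => ?_
    rw [Multiset.mem_range] at hi hj
    simp only [Sym2.eq_iff, Fin.ext_iff, Fin.val_natCast, Fin.val_zero] at h
    simp (disch := omega) only [Nat.mod_eq_of_lt] at h
    omega

lemma nodup_fanChords : (fanChords n).Nodup := by
  refine (Multiset.nodup_range _).map_on fun i hi j hj h => ?_
  rw [Multiset.mem_range] at hi hj
  simp only [Sym2.eq_iff, Fin.ext_iff, Fin.val_natCast, Fin.val_zero] at h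
  simp (disch := omega) only [Nat.mod_eq_of_lt] at h
  omega

lemma edgeMS_fanGraph (hn : 4 ≤ n) : edgeMS (fanGraph n hn) = fanSpokes n + fanRim n := by
  refine (Multiset.Nodup.ext (nodup_edgeMS _) nodup_fanSpokes_add_fanRim).2 fun e => ?_
  induction e using Sym2.ind with | h a b => ?_
  have := a.isLt
  have := b.isLt
  simp only [mem_edgeMS, SimpleGraph.mem_edgeSet, fanGraph_adj, fanSpokes, fanRim,
    Multiset.mem_add, Multiset.mem_map, Multiset.mem_range, Sym2.eq_iff, Fin.ext_iff,
    Fin.val_natCast, Fin.val_zero]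
  constructor
  · rintro ⟨hne, h⟩
    by_cases hspoke : a.val = 0 ∨ b.val = 0
    · refine Or.inl ⟨a.val + b.val - 1, by omega, ?_⟩
      simp (disch := omega) only [Nat.mod_eq_of_lt]
      omega
    · refine Or.inr ⟨min a.val b.val - 1, by omega, ?_⟩
      simp (disch := omega) only [Nat.mod_eq_of_lt]
      omega
  · rintro (⟨j, hj, h⟩ | ⟨i, hi, h⟩) <;> simp (disch := omega) only [Nat.mod_eq_of_lt] at h <;>
      omega

lemma mem_edgeSet_of_mem_fanChords (hn : 4 ≤ n) {e : Sym2 (Fin n)} (he : e ∈ fanChords n) :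
    e ∈ (fanGraph n hn).edgeSet := by
  obtain ⟨j, hj, rfl⟩ := Multiset.mem_map.1 he
  rw [Multiset.mem_range] at hj
  simp only [SimpleGraph.mem_edgeSet, fanGraph_adj, ne_eq, Fin.ext_iff, Fin.val_natCast,
    Fin.val_zero]
  simp (disch := omega) [Nat.mod_eq_of_lt]

lemma isTriangle_fanTriangle {i : ℕ} (hi : i + 2 < n) : IsTriangle (fanTriangle n i) := by
  refine ⟨0, _, _, ?_, ?_, ?_, rfl⟩ <;>
    simp only [ne_eq, Fin.ext_iff, Fin.val_natCast, Fin.val_zero] <;>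
    simp (disch := omega) only [Nat.mod_eq_of_lt] <;> omega

lemma edgeMS_fanGraph_add_fanChords (hn : 4 ≤ n) :
    edgeMS (fanGraph n hn) + fanChords n =
      ((Multiset.range (n - 2)).map (fanTriangle n)).sum := by
  obtain ⟨m, rfl⟩ : ∃ m, n = m + 3 := ⟨n - 3, by omega⟩
  have htri (i : ℕ) : fanTriangle (m + 3) i = {s(0, ((i + 1 : ℕ) : Fin (m + 3)))} +
      {s(((i + 1 : ℕ) : Fin (m + 3)), ((i + 2 : ℕ) : Fin (m + 3)))} +
      {s(0, ((i + 2 : ℕ) : Fin (m + 3)))} := rfl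
  simp only [htri, Multiset.sum_map_add, Multiset.sum_map_singleton', edgeMS_fanGraph,
    fanSpokes, fanRim, fanChords, show m + 3 - 1 = m + 1 + 1 by omega,
    show m + 3 - 2 = m + 1 by omega, Nat.add_sub_cancel]
  simp only [Multiset.range_succ, Multiset.map_cons]
  simp only [← Multiset.singleton_add, show m + 1 + 1 = m + 2 from rfl]
  abel

lemma triDecomp_edgeMS_fanGraph_add_fanChords (hn : 4 ≤ n) :
    TriDecomp (edgeMS (fanGraph n hn) + fanChords n) := by
  refine ⟨_, fun t ht => ?_, (edgeMS_fanGraph_add_fanChords hn).symm⟩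
  obtain ⟨i, hi, rfl⟩ := Multiset.mem_map.1 ht
  exact isTriangle_fanTriangle (by rw [Multiset.mem_range] at hi; omega)

lemma fanGraph_zero_mem_triangle {hn : 4 ≤ n} ⦃a b c : Fin n⦄ (hab : (fanGraph n hn).Adj a b)
    (hbc : (fanGraph n hn).Adj b c) (hac : (fanGraph n hn).Adj a c) :
    0 = a ∨ 0 = b ∨ 0 = c := by
  rw [fanGraph_adj] at hab hbc hac
  simp only [Fin.ext_iff, Fin.val_zero] at hab hbc hac ⊢
  omega

lemma le_card_of_triDecomp_fanGraph (hn : 4 ≤ n) (D : Multiset (Sym2 (Fin n)))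
    (hD : ∀ e ∈ D, e ∈ (fanGraph n hn).edgeSet) (h : TriDecomp (edgeMS (fanGraph n hn) + D)) :
    n - 3 ≤ D.card := by
  have hEG (e) (he : e ∈ edgeMS (fanGraph n hn) + D) : e ∈ (fanGraph n hn).edgeSet :=
    (Multiset.mem_add.1 he).elim mem_edgeMS.1 (hD e)
  have hcount := h.two_mul_card_eq_three_mul_countP hEG fanGraph_zero_mem_triangle
  have hspokes : (fanSpokes n).countP (0 ∈ ·) = (fanSpokes n).card :=
    Multiset.countP_eq_card.2 fun _ => zero_mem_of_mem_fanSpokes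
  have hrim : (fanRim n).countP (0 ∈ ·) = 0 :=
    Multiset.countP_eq_zero.2 fun _ => zero_notMem_of_mem_fanRim
  have hD0 := D.countP_le_card (0 ∈ ·)
  rw [edgeMS_fanGraph, Multiset.card_add, Multiset.card_add, Multiset.countP_add,
    Multiset.countP_add, hspokes, hrim] at hcount
  simp only [fanSpokes, fanRim, Multiset.card_map, Multiset.card_range] at hcount
  omega

end Fan

/-- `ε_Δ(F_n) = n - 3`: duplicating each of the `n - 3` chords of the fan graph yields a
triangle decomposable multigraph, and no multiset of fewer than `n - 3` duplicated edges
of `F_n` yields a triangle decomposable multigraph. -/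
theorem epsDelta_fanGraph (n : ℕ) (hn : 4 ≤ n) :
    epsDelta (fanGraph n hn) = n - 3 ∧
    (∃ D : Multiset (Sym2 (Fin n)), D.Nodup ∧ D.card = n - 3 ∧
      (∀ e ∈ D, ∃ j : ℕ, ∃ _h1 : 2 ≤ j, ∃ _h2 : j ≤ n - 2,
        e = s(⟨0, by omega⟩, ⟨j, by omega⟩)) ∧
      TriDecomp (edgeMS (fanGraph n hn) + D)) ∧
    (∀ D : Multiset (Sym2 (Fin n)), (∀ e ∈ D, e ∈ (fanGraph n hn).edgeSet) →
      D.card < n - 3 → ¬ TriDecomp (edgeMS (fanGraph n hn) + D)) := by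
  have : NeZero n := ⟨by omega⟩
  have hcard : (fanChords n).card = n - 3 := by
    rw [fanChords, Multiset.card_map, Multiset.card_range]
  have hdec := triDecomp_edgeMS_fanGraph_add_fanChords hn
  have hmin := le_card_of_triDecomp_fanGraph hn
  refine ⟨epsDelta_eq_of_forall_le_card hcard (fun _ => mem_edgeSet_of_mem_fanChords hn)
      hdec hmin,
    ⟨fanChords n, nodup_fanChords, hcard, fun e he => ?_, hdec⟩,
    fun D hD hlt h => (hmin D hD h).not_gt hlt⟩
  obtain ⟨j, hj, rfl⟩ := Multiset.mem_map.1 he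
  rw [Multiset.mem_range] at hj
  refine ⟨j + 2, by omega, by omega, ?_⟩
  simp only [Sym2.eq_iff, Fin.ext_iff, Fin.val_natCast, Fin.val_zero]
  simp (disch := omega) [Nat.mod_eq_of_lt]
end

section
/- For every integer n ≥ 4, there exists a simple-clique 3-tree G on n vertices with ε_Δ(G) = 3: there is a multiset of 3 edges of G whose addition to the edge multiset of G yields a triangle decomposable multigraph, and no multiset of fewer than 3 edges of G suffices. -/
/-- The edge set of the simple-clique 3-tree construction on `Fin n`: start with the
complete graph `K_4` on `0,1,2,3`, and each vertex `k ≥ 4` is attached to the three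
vertices `a k, b k, c k` of an existing triangle. -/
def sc3Edges (n : ℕ) (a b c : Fin n → Fin n) : Set (Sym2 (Fin n)) :=
  {e | (∃ i j : Fin n, (i : ℕ) < 4 ∧ (j : ℕ) < 4 ∧ i ≠ j ∧ e = s(i, j)) ∨
       ∃ k : Fin n, 4 ≤ (k : ℕ) ∧ (e = s(k, a k) ∨ e = s(k, b k) ∨ e = s(k, c k))}

/-- `G` is a simple-clique 3-tree: it is built from `K_4` by repeatedly adding a new
vertex adjacent to exactly the three vertices of a triangle of the current graph, each
triangle being used as an attachment triangle at most once. -/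
def IsSC3 {n : ℕ} (G : SimpleGraph (Fin n)) : Prop :=
  ∃ (_hn : 4 ≤ n) (a b c : Fin n → Fin n),
    (∀ k : Fin n, 4 ≤ (k : ℕ) →
      (a k : ℕ) < k ∧ (b k : ℕ) < k ∧ (c k : ℕ) < k ∧
      a k ≠ b k ∧ b k ≠ c k ∧ a k ≠ c k) ∧
    (∀ k : Fin n, 4 ≤ (k : ℕ) →
      s(a k, b k) ∈ sc3Edges n a b c ∧ s(b k, c k) ∈ sc3Edges n a b c ∧
      s(a k, c k) ∈ sc3Edges n a b c) ∧
    (∀ k l : Fin n, 4 ≤ (k : ℕ) → 4 ≤ (l : ℕ) → k ≠ l →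
      ({a k, b k, c k} : Finset (Fin n)) ≠ {a l, b l, c l}) ∧
    G = SimpleGraph.fromEdgeSet (sc3Edges n a b c)

namespace SC3A

variable (n : ℕ) (hn : 4 ≤ n)

def vtx (i : ℕ) : Fin n := ⟨i % n, Nat.mod_lt _ (by omega)⟩

lemma vtx_inj (i j : ℕ) (hi : i < n) (hj : j < n) : vtx n hn i = vtx n hn j ↔ i = j := by
  constructor
  · intro h
    have := congrArg (Fin.val) h
    simpa [vtx, Nat.mod_eq_of_lt hi, Nat.mod_eq_of_lt hj] using this
  · rintro rfl; rfl

def tri (x y z : Fin n) : Multiset (Sym2 (Fin n)) := {s(x, y), s(y, z), s(x, z)}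

def base : Multiset (Sym2 (Fin n)) :=
  {s(vtx n hn 0, vtx n hn 1), s(vtx n hn 0, vtx n hn 2), s(vtx n hn 0, vtx n hn 3),
   s(vtx n hn 1, vtx n hn 2), s(vtx n hn 1, vtx n hn 3), s(vtx n hn 2, vtx n hn 3)}

def gk (k : ℕ) : Multiset (Sym2 (Fin n)) :=
  {s(vtx n hn 0, vtx n hn k), s(vtx n hn 1, vtx n hn k), s(vtx n hn (k-1), vtx n hn k)}

def EM (m : ℕ) : Multiset (Sym2 (Fin n)) :=
  base n hn + (Multiset.range m).bind (fun k => if 4 ≤ k then gk n hn k else 0)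

lemma EM_succ (m : ℕ) :
    EM n hn (m+1) = EM n hn m + (if 4 ≤ m then gk n hn m else 0) := by
  simp only [EM, Multiset.range_succ, Multiset.cons_bind]
  rw [add_comm ((if 4 ≤ m then gk n hn m else 0))]
  ring_nf
  rw [add_assoc, add_comm ((Multiset.range m).bind _)]

lemma EM_four : EM n hn 4 = base n hn := by
  simp [EM, Multiset.range_succ]

lemma vtx_ne (i j : ℕ) (hi : i < n) (hj : j < n) (hij : i ≠ j) :
    vtx n hn i ≠ vtx n hn j := by
  rw [Ne, vtx_inj n hn _ _ hi hj]; exact hij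

lemma decompAux : ∀ m, 4 ≤ m → m ≤ n →
    ∃ T : Multiset (Multiset (Sym2 (Fin n))), (∀ t ∈ T, IsTriangle t) ∧
      T.sum + {s(vtx n hn (if Even m then 0 else 1), vtx n hn (m-1))}
        = EM n hn m + {s(vtx n hn 1, vtx n hn 2)} := by
  intro m
  induction m with
  | zero => omega
  | succ m ih =>
    intro h4 hle
    rcases Nat.lt_or_ge m 4 with hm | hm
    · -- m+1 = 4
      have hm4 : m = 3 := by omega
      subst hm4
      refine ⟨{tri n (vtx n hn 0) (vtx n hn 1) (vtx n hn 2),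
               tri n (vtx n hn 1) (vtx n hn 2) (vtx n hn 3)}, ?_, ?_⟩
      · intro t ht
        simp only [Multiset.insert_eq_cons, Multiset.mem_cons, Multiset.mem_singleton] at ht
        rcases ht with rfl | rfl <;>
          exact ⟨_, _, _, vtx_ne n hn _ _ (by omega) (by omega) (by omega),
            vtx_ne n hn _ _ (by omega) (by omega) (by omega),
            vtx_ne n hn _ _ (by omega) (by omega) (by omega), rfl⟩
      · rw [EM_four]
        simp only [show (3:ℕ)+1-1 = 3 from rfl,
          show (if Even (3+1) then (0:ℕ) else 1) = 0 from by decide]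
        simp only [tri, base, Multiset.sum_cons, Multiset.sum_add, Multiset.sum_singleton,
          Multiset.insert_eq_cons, ← Multiset.singleton_add]
        ac_rfl
    · -- inductive step, m ≥ 4
      obtain ⟨T, hT, hsum⟩ := ih hm (by omega)
      refine ⟨tri n (vtx n hn (if Even m then 0 else 1)) (vtx n hn (m-1)) (vtx n hn m)
          ::ₘ T, ?_, ?_⟩
      · intro t ht
        rcases Multiset.mem_cons.mp ht with rfl | ht
        · rcases Nat.even_or_odd m with he | he
          · rw [if_pos he]
            exact ⟨_, _, _, vtx_ne n hn 0 (m-1) (by omega) (by omega) (by omega),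
              vtx_ne n hn (m-1) m (by omega) (by omega) (by omega),
              vtx_ne n hn 0 m (by omega) (by omega) (by omega), rfl⟩
          · rw [if_neg (Nat.not_even_iff_odd.mpr he)]
            exact ⟨_, _, _, vtx_ne n hn 1 (m-1) (by omega) (by omega) (by omega),
              vtx_ne n hn (m-1) m (by omega) (by omega) (by omega),
              vtx_ne n hn 1 m (by omega) (by omega) (by omega), rfl⟩
        · exact hT t ht
      · rw [Multiset.sum_cons, EM_succ, if_pos hm]
        have key' : tri n (vtx n hn (if Even m then 0 else 1)) (vtx n hn (m-1)) (vtx n hn m)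
              + {s(vtx n hn (if Even (m+1) then 0 else 1), vtx n hn (m+1-1))}
            = gk n hn m + {s(vtx n hn (if Even m then 0 else 1), vtx n hn (m-1))} := by
          rcases Nat.even_or_odd m with he | he
          · have h1 : ¬ Even (m+1) := by simp [Nat.even_add_one, he]
            rw [if_pos he, if_neg h1]
            simp only [tri, gk, Nat.add_sub_cancel, Multiset.insert_eq_cons,
              ← Multiset.singleton_add]
            ac_rfl
          · have h0 : Even (m+1) := by simp [Nat.even_add_one, Nat.not_even_iff_odd.mpr he]
            rw [if_neg (Nat.not_even_iff_odd.mpr he), if_pos h0]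
            simp only [tri, gk, Nat.add_sub_cancel, Multiset.insert_eq_cons,
              ← Multiset.singleton_add]
            ac_rfl
        calc tri n (vtx n hn (if Even m then 0 else 1)) (vtx n hn (m-1)) (vtx n hn m) + T.sum
              + {s(vtx n hn (if Even (m+1) then 0 else 1), vtx n hn (m+1-1))}
            = tri n (vtx n hn (if Even m then 0 else 1)) (vtx n hn (m-1)) (vtx n hn m)
              + {s(vtx n hn (if Even (m+1) then 0 else 1), vtx n hn (m+1-1))} + T.sum := by
              ac_rfl
          _ = gk n hn m + {s(vtx n hn (if Even m then 0 else 1), vtx n hn (m-1))} + T.sum := by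
              rw [key']
          _ = gk n hn m + (T.sum + {s(vtx n hn (if Even m then 0 else 1), vtx n hn (m-1))}) := by
              ac_rfl
          _ = gk n hn m + (EM n hn m + {s(vtx n hn 1, vtx n hn 2)}) := by rw [hsum]
          _ = EM n hn m + gk n hn m + {s(vtx n hn 1, vtx n hn 2)} := by ac_rfl

def Dn : Multiset (Sym2 (Fin n)) :=
  {s(vtx n hn 0, vtx n hn 1), s(vtx n hn 1, vtx n hn 2),
   s(vtx n hn (if Even n then 1 else 0), vtx n hn (n-1))}

lemma upper : ∃ T : Multiset (Multiset (Sym2 (Fin n))),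
    (∀ t ∈ T, IsTriangle t) ∧ T.sum = EM n hn n + Dn n hn := by
  obtain ⟨T, hT, hsum⟩ := decompAux n hn n hn le_rfl
  refine ⟨tri n (vtx n hn 0) (vtx n hn 1) (vtx n hn (n-1)) ::ₘ T, ?_, ?_⟩
  · intro t ht
    rcases Multiset.mem_cons.mp ht with rfl | ht
    · exact ⟨_, _, _, vtx_ne n hn 0 1 (by omega) (by omega) (by omega),
        vtx_ne n hn 1 (n-1) (by omega) (by omega) (by omega),
        vtx_ne n hn 0 (n-1) (by omega) (by omega) (by omega), rfl⟩
    · exact hT t ht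
  · rw [Multiset.sum_cons]
    refine add_right_cancel (b := {s(vtx n hn (if Even n then 0 else 1), vtx n hn (n-1))}) ?_
    calc tri n (vtx n hn 0) (vtx n hn 1) (vtx n hn (n-1)) + T.sum
          + {s(vtx n hn (if Even n then 0 else 1), vtx n hn (n-1))}
        = tri n (vtx n hn 0) (vtx n hn 1) (vtx n hn (n-1))
          + (T.sum + {s(vtx n hn (if Even n then 0 else 1), vtx n hn (n-1))}) := by ac_rfl
      _ = tri n (vtx n hn 0) (vtx n hn 1) (vtx n hn (n-1))
          + (EM n hn n + {s(vtx n hn 1, vtx n hn 2)}) := by rw [hsum]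
      _ = EM n hn n + Dn n hn + {s(vtx n hn (if Even n then 0 else 1), vtx n hn (n-1))} := by
          rcases Nat.even_or_odd n with he | he
          · rw [if_pos he]
            simp only [Dn, if_pos he, tri, Multiset.insert_eq_cons, ← Multiset.singleton_add]
            ac_rfl
          · rw [if_neg (Nat.not_even_iff_odd.mpr he)]
            simp only [Dn, if_neg (Nat.not_even_iff_odd.mpr he), tri,
              Multiset.insert_eq_cons, ← Multiset.singleton_add]
            ac_rfl

lemma three_dvd_card (m : ℕ) : 3 ∣ Multiset.card (EM n hn m) := by
  induction m with
  | zero =>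
    refine ⟨2, ?_⟩
    simp [EM, base]
  | succ m ih =>
    rw [EM_succ, Multiset.card_add]
    rcases ih with ⟨c, hc⟩
    refine ⟨c + (if 4 ≤ m then 1 else 0), ?_⟩
    split <;> simp [hc, gk, mul_add]

def inc (v : Fin n) (E : Multiset (Sym2 (Fin n))) : ℕ :=
  Multiset.card (E.filter (fun e => v ∈ e))

lemma inc_add (v : Fin n) (E F : Multiset (Sym2 (Fin n))) :
    inc n v (E + F) = inc n v E + inc n v F := by
  simp [inc, Multiset.filter_add]

lemma even_inc_tri (v : Fin n) (t : Multiset (Sym2 (Fin n))) (ht : IsTriangle t) :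
    Even (inc n v t) := by
  obtain ⟨a, b, c, hab, hbc, hac, rfl⟩ := ht
  by_cases hva : v = a <;> by_cases hvb : v = b <;> by_cases hvc : v = c <;>
    simp_all [inc, Multiset.insert_eq_cons, Multiset.filter_cons, Multiset.filter_singleton,
      Sym2.mem_iff] <;> omega

lemma even_inc_decomp (v : Fin n) (E : Multiset (Sym2 (Fin n)))
    (h : TriDecomp E) : Even (inc n v E) := by
  obtain ⟨T, hT, rfl⟩ := h
  induction T using Multiset.induction with
  | empty => simp [inc]
  | cons t T ih =>
    rw [Multiset.sum_cons, inc_add]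
    exact Even.add (even_inc_tri n v t (hT t (Multiset.mem_cons_self t T)))
      (ih fun t' ht' => hT t' (Multiset.mem_cons_of_mem ht'))

lemma three_dvd_decomp (E : Multiset (Sym2 (Fin n))) (h : TriDecomp E) :
    3 ∣ Multiset.card E := by
  obtain ⟨T, hT, rfl⟩ := h
  induction T using Multiset.induction with
  | empty => simp
  | cons t T ih =>
    rw [Multiset.sum_cons, Multiset.card_add]
    obtain ⟨a, b, c, -, -, -, rfl⟩ := hT t (Multiset.mem_cons_self t T)
    have := ih fun t' ht' => hT t' (Multiset.mem_cons_of_mem ht')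
    simp only [Multiset.insert_eq_cons, Multiset.card_cons, Multiset.card_singleton]
    omega

lemma notmem_vtx2 (p q : ℕ) (hp : p < n) (hq : q < n) (hp2 : p ≠ 2) (hq2 : q ≠ 2) :
    ¬ (vtx n hn 2 ∈ s(vtx n hn p, vtx n hn q)) := by
  rw [Sym2.mem_iff, vtx_inj n hn 2 p (by omega) hp, vtx_inj n hn 2 q (by omega) hq]
  omega

lemma mem_vtx2 (p q : ℕ) (hp : p < n) (hq : q < n) (h : p = 2 ∨ q = 2) :
    vtx n hn 2 ∈ s(vtx n hn p, vtx n hn q) := by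
  rw [Sym2.mem_iff, vtx_inj n hn 2 p (by omega) hp, vtx_inj n hn 2 q (by omega) hq]
  omega

lemma inc_vtx2 : ∀ m, m ≤ n → inc n (vtx n hn 2) (EM n hn m) = 3 := by
  intro m
  induction m with
  | zero =>
    intro _
    simp only [EM, Multiset.range_zero, Multiset.zero_bind, add_zero, inc, base,
      Multiset.insert_eq_cons]
    rw [Multiset.filter_cons, Multiset.filter_cons, Multiset.filter_cons, Multiset.filter_cons,
      Multiset.filter_cons, Multiset.filter_singleton]
    rw [if_neg (notmem_vtx2 n hn 0 1 (by omega) (by omega) (by omega) (by omega)),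
      if_pos (mem_vtx2 n hn 0 2 (by omega) (by omega) (by omega)),
      if_neg (notmem_vtx2 n hn 0 3 (by omega) (by omega) (by omega) (by omega)),
      if_pos (mem_vtx2 n hn 1 2 (by omega) (by omega) (by omega)),
      if_neg (notmem_vtx2 n hn 1 3 (by omega) (by omega) (by omega) (by omega)),
      if_pos (mem_vtx2 n hn 2 3 (by omega) (by omega) (by omega))]
    simp
  | succ m ih =>
    intro hle
    rw [EM_succ, inc_add, ih (by omega)]
    rcases Nat.lt_or_ge m 4 with hm | hm
    · rw [if_neg (by omega)]; rfl
    · rw [if_pos hm]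
      have h0 : inc n (vtx n hn 2) (gk n hn m) = 0 := by
        simp only [inc, gk, Multiset.insert_eq_cons]
        rw [Multiset.filter_cons, Multiset.filter_cons, Multiset.filter_singleton]
        rw [if_neg (notmem_vtx2 n hn 0 m (by omega) (by omega) (by omega) (by omega)),
          if_neg (notmem_vtx2 n hn 1 m (by omega) (by omega) (by omega) (by omega)),
          if_neg (notmem_vtx2 n hn (m-1) m (by omega) (by omega) (by omega) (by omega))]
        simp
      rw [h0]

lemma vtx_val' (i : ℕ) (h : i < n) : ((vtx n hn i : Fin n) : ℕ) = i := Nat.mod_eq_of_lt h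

lemma vtx_fin (i : Fin n) : vtx n hn (i : ℕ) = i := Fin.ext (Nat.mod_eq_of_lt i.2)

lemma sym2_vtx_ne (p q r t : ℕ) (hp : p < n) (hq : q < n) (hr : r < n) (ht : t < n)
    (h1 : ¬(p = r ∧ q = t)) (h2 : ¬(p = t ∧ q = r)) :
    s(vtx n hn p, vtx n hn q) ≠ s(vtx n hn r, vtx n hn t) := by
  rw [Ne, Sym2.eq_iff, vtx_inj n hn p r hp hr, vtx_inj n hn q t hq ht,
    vtx_inj n hn p t hp ht, vtx_inj n hn q r hq hr]
  tauto

lemma nodup_base : (base n hn).Nodup := by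
  have hmap : (base n hn).map (Sym2.map Fin.val)
      = ({s(0,1), s(0,2), s(0,3), s(1,2), s(1,3), s(2,3)} : Multiset (Sym2 ℕ)) := by
    simp [base, Sym2.map_pair_eq, vtx_val' n hn 0 (by omega), vtx_val' n hn 1 (by omega),
      vtx_val' n hn 2 (by omega), vtx_val' n hn 3 (by omega)]
  have : ((base n hn).map (Sym2.map Fin.val)).Nodup := by rw [hmap]; decide
  exact Multiset.Nodup.of_map _ this

lemma nodup_gk (k : ℕ) (h4 : 4 ≤ k) (hk : k < n) : (gk n hn k).Nodup := by
  simp only [gk, Multiset.insert_eq_cons, Multiset.nodup_cons, Multiset.mem_cons,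
    Multiset.mem_singleton, Multiset.nodup_singleton, and_true]
  refine ⟨?_, ?_⟩
  · push_neg
    exact ⟨sym2_vtx_ne n hn 0 k 1 k (by omega) hk (by omega) hk (by omega) (by omega),
      sym2_vtx_ne n hn 0 k (k-1) k (by omega) hk (by omega) hk (by omega) (by omega)⟩
  · exact sym2_vtx_ne n hn 1 k (k-1) k (by omega) hk (by omega) hk (by omega) (by omega)

lemma mem_EM_iff (m : ℕ) (e : Sym2 (Fin n)) :
    e ∈ EM n hn m ↔ e ∈ base n hn ∨ ∃ k, 4 ≤ k ∧ k < m ∧ e ∈ gk n hn k := by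
  simp only [EM, Multiset.mem_add, Multiset.mem_bind, Multiset.mem_range]
  constructor
  · rintro (h | ⟨k, hk, hke⟩)
    · exact Or.inl h
    · right
      by_cases h4 : 4 ≤ k
      · rw [if_pos h4] at hke; exact ⟨k, h4, hk, hke⟩
      · rw [if_neg h4] at hke; simp at hke
  · rintro (h | ⟨k, h4, hk, hke⟩)
    · exact Or.inl h
    · exact Or.inr ⟨k, hk, by rw [if_pos h4]; exact hke⟩

lemma mem_EM_lt (m : ℕ) (hm : m ≤ n) (e : Sym2 (Fin n)) (he : e ∈ EM n hn m)
    (v : Fin n) (hv : v ∈ e) : (v : ℕ) < 4 ∨ (v : ℕ) < m := by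
  rcases (mem_EM_iff n hn m e).mp he with hb | ⟨k, h4, hk, hke⟩
  · left
    simp only [base, Multiset.insert_eq_cons, Multiset.mem_cons, Multiset.mem_singleton] at hb
    rcases hb with rfl | rfl | rfl | rfl | rfl | rfl <;>
      rcases Sym2.mem_iff.mp hv with rfl | rfl <;>
      rw [vtx_val' n hn _ (by omega)] <;> omega
  · right
    simp only [gk, Multiset.insert_eq_cons, Multiset.mem_cons, Multiset.mem_singleton] at hke
    rcases hke with rfl | rfl | rfl <;>
      rcases Sym2.mem_iff.mp hv with rfl | rfl <;>
      rw [vtx_val' n hn _ (by omega)] <;> omega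

lemma nodup_EM : ∀ m, m ≤ n → (EM n hn m).Nodup := by
  intro m
  induction m with
  | zero =>
    intro _
    have : EM n hn 0 = base n hn := by simp [EM]
    rw [this]; exact nodup_base n hn
  | succ m ih =>
    intro hle
    rw [EM_succ]
    rcases Nat.lt_or_ge m 4 with hm | hm
    · rw [if_neg (by omega), add_zero]; exact ih (by omega)
    · rw [if_pos hm]
      rw [Multiset.nodup_add]
      refine ⟨ih (by omega), nodup_gk n hn m hm (by omega), ?_⟩
      rw [Multiset.disjoint_left]
      intro e heE heg
      have hvm : vtx n hn m ∈ e := by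
        simp only [gk, Multiset.insert_eq_cons, Multiset.mem_cons, Multiset.mem_singleton] at heg
        rcases heg with rfl | rfl | rfl <;> simp [Sym2.mem_iff]
      have := mem_EM_lt n hn m (by omega) e heE _ hvm
      rw [vtx_val' n hn m (by omega)] at this
      omega

lemma base_mem_aux (p q : ℕ) (hp : p < 4) (hq : q < 4) (hpq : p ≠ q) :
    s(vtx n hn p, vtx n hn q) ∈ base n hn := by
  interval_cases p <;> interval_cases q <;>
    first
      | omega
      | simp [base]
      | (rw [Sym2.eq_swap]; simp [base])

def Af : Fin n → Fin n := fun _ => vtx n hn 0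
def Bf : Fin n → Fin n := fun _ => vtx n hn 1
def Cf : Fin n → Fin n := fun k => vtx n hn ((k : ℕ) - 1)

lemma mem_S_iff (e : Sym2 (Fin n)) :
    e ∈ sc3Edges n (Af n hn) (Bf n hn) (Cf n hn) ↔ e ∈ EM n hn n := by
  rw [mem_EM_iff]
  constructor
  · rintro (⟨i, j, hi, hj, hij, rfl⟩ | ⟨k, hk, he⟩)
    · left
      rw [← vtx_fin n hn i, ← vtx_fin n hn j]
      exact base_mem_aux n hn _ _ hi hj (fun h => hij (Fin.val_injective h))
    · right
      refine ⟨(k : ℕ), hk, k.2, ?_⟩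
      simp only [Af, Bf, Cf] at he
      rcases he with rfl | rfl | rfl <;>
        rw [Sym2.eq_swap] <;>
        simp [gk, vtx_fin]
  · rintro (hb | ⟨k, h4, hk, hke⟩)
    · left
      simp only [base, Multiset.insert_eq_cons, Multiset.mem_cons, Multiset.mem_singleton] at hb
      rcases hb with rfl | rfl | rfl | rfl | rfl | rfl <;>
        exact ⟨_, _, by rw [vtx_val' n hn _ (by omega)]; omega,
          by rw [vtx_val' n hn _ (by omega)]; omega,
          vtx_ne n hn _ _ (by omega) (by omega) (by omega), rfl⟩
    · right
      refine ⟨vtx n hn k, by rw [vtx_val' n hn k hk]; exact h4, ?_⟩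
      simp only [Af, Bf, Cf, vtx_val' n hn k hk]
      simp only [gk, Multiset.insert_eq_cons, Multiset.mem_cons, Multiset.mem_singleton] at hke
      rcases hke with rfl | rfl | rfl
      · left; rw [Sym2.eq_swap]
      · right; left; rw [Sym2.eq_swap]
      · right; right; rw [Sym2.eq_swap]

lemma Dn_sub_EM (e : Sym2 (Fin n)) (he : e ∈ Dn n hn) : e ∈ EM n hn n := by
  rw [mem_EM_iff]
  simp only [Dn, Multiset.insert_eq_cons, Multiset.mem_cons, Multiset.mem_singleton] at he
  rcases he with rfl | rfl | rfl
  · exact Or.inl (base_mem_aux n hn 0 1 (by omega) (by omega) (by omega))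
  · exact Or.inl (base_mem_aux n hn 1 2 (by omega) (by omega) (by omega))
  · have hy : (if Even n then 1 else 0) < 2 := by split <;> omega
    rcases Nat.lt_or_ge (n-1) 4 with h | h
    · exact Or.inl (base_mem_aux n hn _ _ (by omega) (by omega) (by omega))
    · refine Or.inr ⟨n-1, h, by omega, ?_⟩
      simp only [gk, Multiset.insert_eq_cons, Multiset.mem_cons, Multiset.mem_singleton]
      split <;> simp

lemma S_not_diag (e : Sym2 (Fin n))
    (he : e ∈ sc3Edges n (Af n hn) (Bf n hn) (Cf n hn)) : ¬ e.IsDiag := by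
  have := (mem_S_iff n hn e).mp he
  rw [mem_EM_iff] at this
  rcases this with hb | ⟨k, h4, hk, hke⟩
  · simp only [base, Multiset.insert_eq_cons, Multiset.mem_cons, Multiset.mem_singleton] at hb
    rcases hb with rfl | rfl | rfl | rfl | rfl | rfl <;>
      · rw [Sym2.mk_isDiag_iff]
        exact vtx_ne n hn _ _ (by omega) (by omega) (by omega)
  · simp only [gk, Multiset.insert_eq_cons, Multiset.mem_cons, Multiset.mem_singleton] at hke
    rcases hke with rfl | rfl | rfl <;>
      · rw [Sym2.mk_isDiag_iff]
        exact vtx_ne n hn _ _ (by omega) (by omega) (by omega)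

lemma edgeSet_G :
    (SimpleGraph.fromEdgeSet (sc3Edges n (Af n hn) (Bf n hn) (Cf n hn))).edgeSet
      = sc3Edges n (Af n hn) (Bf n hn) (Cf n hn) := by
  rw [SimpleGraph.edgeSet_fromEdgeSet]
  ext e
  simp only [Set.mem_diff, Set.mem_setOf_eq]
  exact ⟨fun h => h.1, fun h => ⟨h, S_not_diag n hn e h⟩⟩

lemma edgeMS_G :
    edgeMS (SimpleGraph.fromEdgeSet (sc3Edges n (Af n hn) (Bf n hn) (Cf n hn)))
      = EM n hn n := by
  refine (Multiset.Nodup.ext ?_ (nodup_EM n hn n le_rfl)).mpr ?_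
  · exact Finset.nodup _
  · intro e
    show e ∈ (Set.Finite.toFinset _).val ↔ _
    rw [Finset.mem_val, Set.Finite.mem_toFinset, edgeSet_G]
    exact mem_S_iff n hn e

lemma isSC3_G : ∃ (_hn : 4 ≤ n) (a b c : Fin n → Fin n),
    (∀ k : Fin n, 4 ≤ (k : ℕ) →
      (a k : ℕ) < k ∧ (b k : ℕ) < k ∧ (c k : ℕ) < k ∧
      a k ≠ b k ∧ b k ≠ c k ∧ a k ≠ c k) ∧
    (∀ k : Fin n, 4 ≤ (k : ℕ) →
      s(a k, b k) ∈ sc3Edges n a b c ∧ s(b k, c k) ∈ sc3Edges n a b c ∧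
      s(a k, c k) ∈ sc3Edges n a b c) ∧
    (∀ k l : Fin n, 4 ≤ (k : ℕ) → 4 ≤ (l : ℕ) → k ≠ l →
      ({a k, b k, c k} : Finset (Fin n)) ≠ {a l, b l, c l}) ∧
    SimpleGraph.fromEdgeSet (sc3Edges n (Af n hn) (Bf n hn) (Cf n hn))
      = SimpleGraph.fromEdgeSet (sc3Edges n a b c) := by
  refine ⟨hn, Af n hn, Bf n hn, Cf n hn, ?_, ?_, ?_, rfl⟩
  · intro k hk
    have hkn : (k : ℕ) < n := k.2
    refine ⟨?_, ?_, ?_, ?_, ?_, ?_⟩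
    · rw [Af, vtx_val' n hn 0 (by omega)]; omega
    · rw [Bf, vtx_val' n hn 1 (by omega)]; omega
    · rw [Cf, vtx_val' n hn _ (by omega)]; omega
    · exact vtx_ne n hn 0 1 (by omega) (by omega) (by omega)
    · exact vtx_ne n hn 1 _ (by omega) (by omega) (by omega)
    · exact vtx_ne n hn 0 _ (by omega) (by omega) (by omega)
  · intro k hk
    have hkn : (k : ℕ) < n := k.2
    refine ⟨?_, ?_, ?_⟩
    · rw [mem_S_iff, mem_EM_iff]
      exact Or.inl (base_mem_aux n hn 0 1 (by omega) (by omega) (by omega))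
    · rw [mem_S_iff, mem_EM_iff]
      rcases Nat.lt_or_ge ((k:ℕ)-1) 4 with h | h
      · exact Or.inl (base_mem_aux n hn 1 _ (by omega) h (by omega))
      · refine Or.inr ⟨(k:ℕ)-1, h, by omega, ?_⟩
        simp [gk, Bf, Cf]
    · rw [mem_S_iff, mem_EM_iff]
      rcases Nat.lt_or_ge ((k:ℕ)-1) 4 with h | h
      · exact Or.inl (base_mem_aux n hn 0 _ (by omega) h (by omega))
      · refine Or.inr ⟨(k:ℕ)-1, h, by omega, ?_⟩
        simp [gk, Af, Cf]
  · intro k l hk hl hkl hEq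
    have hkn : (k : ℕ) < n := k.2
    have hln : (l : ℕ) < n := l.2
    have hmem : Cf n hn k ∈ ({Af n hn l, Bf n hn l, Cf n hn l} : Finset (Fin n)) := by
      rw [← hEq]
      simp [Finset.mem_insert]
    simp only [Finset.mem_insert, Finset.mem_singleton] at hmem
    have hvne : (k : ℕ) ≠ (l : ℕ) := fun h => hkl (Fin.ext h)
    rcases hmem with h | h | h
    · rw [Cf, Af, vtx_inj n hn _ _ (by omega) (by omega)] at h; omega
    · rw [Cf, Bf, vtx_inj n hn _ _ (by omega) (by omega)] at h; omega
    · rw [Cf, Cf, vtx_inj n hn _ _ (by omega) (by omega)] at h; omega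

end SC3A

/-- For every `n ≥ 4` there exists a simple-clique 3-tree `G` on `n` vertices with
`ε_Δ(G) = 3`: some multiset of three edges of `G` makes it triangle decomposable, while
no multiset of fewer than three edges of `G` suffices. -/
theorem exists_sc3_epsDelta_eq_three (n : ℕ) (hn : 4 ≤ n) :
    ∃ G : SimpleGraph (Fin n), IsSC3 G ∧ epsDelta G = 3 ∧
      (∃ D : Multiset (Sym2 (Fin n)), D.card = 3 ∧ (∀ e ∈ D, e ∈ G.edgeSet) ∧
        TriDecomp (edgeMS G + D)) ∧
      (∀ D : Multiset (Sym2 (Fin n)), D.card < 3 → (∀ e ∈ D, e ∈ G.edgeSet) →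
        ¬ TriDecomp (edgeMS G + D)) := by
  classical
  refine ⟨SimpleGraph.fromEdgeSet
      (sc3Edges n (SC3A.Af n hn) (SC3A.Bf n hn) (SC3A.Cf n hn)), ?_, ?_, ?_, ?_⟩
  case refine_3 =>
    refine ⟨SC3A.Dn n hn, ?_, ?_, ?_⟩
    · simp [SC3A.Dn]
    · intro e he
      rw [SC3A.edgeSet_G, SC3A.mem_S_iff]
      exact SC3A.Dn_sub_EM n hn e he
    · rw [SC3A.edgeMS_G]
      obtain ⟨T, hT, hsum⟩ := SC3A.upper n hn
      exact ⟨T, hT, hsum⟩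
  case refine_4 =>
    intro D hD hDe hTD
    rw [SC3A.edgeMS_G] at hTD
    rcases Nat.lt_or_ge D.card 1 with h0 | h1
    · have hD0 : D = 0 := Multiset.card_eq_zero.mp (by omega)
      subst hD0
      rw [add_zero] at hTD
      have := SC3A.even_inc_decomp n (SC3A.vtx n hn 2) _ hTD
      rw [SC3A.inc_vtx2 n hn n le_rfl] at this
      simp [Nat.even_iff] at this
    · have h3 := SC3A.three_dvd_decomp n _ hTD
      rw [Multiset.card_add] at h3
      have h6 := SC3A.three_dvd_card n hn n
      omega
  case refine_1 => exact SC3A.isSC3_G n hn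
  case refine_2 =>
    have h3mem : 3 ∈ {k | ∃ D : Multiset (Sym2 (Fin n)), D.card = k ∧
        (∀ e ∈ D, e ∈ (SimpleGraph.fromEdgeSet
          (sc3Edges n (SC3A.Af n hn) (SC3A.Bf n hn) (SC3A.Cf n hn))).edgeSet) ∧
        TriDecomp (edgeMS (SimpleGraph.fromEdgeSet
          (sc3Edges n (SC3A.Af n hn) (SC3A.Bf n hn) (SC3A.Cf n hn))) + D)} := by
      refine ⟨SC3A.Dn n hn, ?_, ?_, ?_⟩
      · simp [SC3A.Dn]
      · intro e he
        rw [SC3A.edgeSet_G, SC3A.mem_S_iff]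
        exact SC3A.Dn_sub_EM n hn e he
      · rw [SC3A.edgeMS_G]
        obtain ⟨T, hT, hsum⟩ := SC3A.upper n hn
        exact ⟨T, hT, hsum⟩
    have hlb : ∀ k ∈ {k | ∃ D : Multiset (Sym2 (Fin n)), D.card = k ∧
        (∀ e ∈ D, e ∈ (SimpleGraph.fromEdgeSet
          (sc3Edges n (SC3A.Af n hn) (SC3A.Bf n hn) (SC3A.Cf n hn))).edgeSet) ∧
        TriDecomp (edgeMS (SimpleGraph.fromEdgeSet
          (sc3Edges n (SC3A.Af n hn) (SC3A.Bf n hn) (SC3A.Cf n hn))) + D)}, 3 ≤ k := by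
      rintro k ⟨D, rfl, hDe, hTD⟩
      by_contra hlt
      push_neg at hlt
      rw [SC3A.edgeMS_G] at hTD
      rcases Nat.lt_or_ge D.card 1 with h0 | h1
      · have hD0 : D = 0 := Multiset.card_eq_zero.mp (by omega)
        subst hD0
        rw [add_zero] at hTD
        have := SC3A.even_inc_decomp n (SC3A.vtx n hn 2) _ hTD
        rw [SC3A.inc_vtx2 n hn n le_rfl] at this
        simp [Nat.even_iff] at this
      · have h3 := SC3A.three_dvd_decomp n _ hTD
        rw [Multiset.card_add] at h3
        have h6 := SC3A.three_dvd_card n hn n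
        omega
    exact le_antisymm (Nat.sInf_le h3mem) (hlb _ (Nat.sInf_mem ⟨3, h3mem⟩))
end

section
/- Every simple-clique 3-tree on n ≥ 4 vertices has at least two vertices of odd degree; in particular, no simple-clique 3-tree has all vertex degrees even. -/
lemma sc3_ncard_eq_degree {V} [Fintype V] (G : SimpleGraph V) [DecidableRel G.Adj] (w : V) :
    (G.neighborSet w).ncard = G.degree w := by
  rw [Set.ncard_eq_toFinset_card']; rfl

/-- Every simple-clique 3-tree has at least two vertices of odd degree; in particular it
is never the case that all vertex degrees are even. -/
theorem sc3_two_odd_degree_vertices {n : ℕ} (G : SimpleGraph (Fin n)) (hG : IsSC3 G) :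
    (∃ u v : Fin n, u ≠ v ∧
      Odd ((G.neighborSet u).ncard) ∧ Odd ((G.neighborSet v).ncard)) ∧
    ¬ (∀ v : Fin n, Even ((G.neighborSet v).ncard)) := by
  classical
  obtain ⟨hn, a, b, c, hstep, -, -, rfl⟩ := hG
  set G := SimpleGraph.fromEdgeSet (sc3Edges n a b c) with hGdef
  set v : Fin n := ⟨n - 1, by omega⟩ with hvdef
  have hvval : (v : ℕ) = n - 1 := rfl
  have hcard : (G.neighborSet v).ncard = 3 := by
    rcases Nat.lt_or_ge n 5 with h4 | h5
    · -- n = 4 case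
      have hn4 : n = 4 := by omega
      subst hn4
      have hNS : G.neighborSet v = {w | w ≠ v} := by
        ext w
        simp only [SimpleGraph.mem_neighborSet, hGdef, SimpleGraph.fromEdgeSet_adj,
          Set.mem_setOf_eq]
        constructor
        · rintro ⟨-, hne⟩; exact fun h => hne h.symm
        · intro hne
          exact ⟨Or.inl ⟨v, w, v.isLt, w.isLt, fun h => hne (h.symm), rfl⟩,
            fun h => hne h.symm⟩
      rw [hNS]
      rw [Set.ncard_eq_three]
      refine ⟨0, 1, 2, by decide, by decide, by decide, ?_⟩
      ext w
      fin_cases w <;> simp [hvdef] <;> decide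
    · -- n ≥ 5 case
      have hv4 : 4 ≤ (v : ℕ) := by simp [hvval]; omega
      obtain ⟨ha, hb, hc, hab, hbc, hac⟩ := hstep v hv4
      have hlt : ∀ k : Fin n, 4 ≤ (k : ℕ) → (a k : ℕ) < k ∧ (b k : ℕ) < k ∧ (c k : ℕ) < k :=
        fun k hk => ⟨(hstep k hk).1, (hstep k hk).2.1, (hstep k hk).2.2.1⟩
      have hNS : G.neighborSet v = {a v, b v, c v} := by
        ext w
        simp only [SimpleGraph.mem_neighborSet, hGdef, SimpleGraph.fromEdgeSet_adj,
          Set.mem_insert_iff, Set.mem_singleton_iff]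
        constructor
        · rintro ⟨h, hne⟩
          rcases h with ⟨i, j, hi, hj, hij, he⟩ | ⟨k, hk, he⟩
          · rw [Sym2.eq_iff] at he
            rcases he with ⟨h1, -⟩ | ⟨h1, -⟩ <;>
              · have := congrArg Fin.val h1; omega
          · have hmax : ∀ u : Fin n, (u : ℕ) < (k : ℕ) → v ≠ u := by
              intro u hu h
              have := congrArg Fin.val h
              have : (k : ℕ) < n := k.isLt
              omega
            obtain ⟨hak, hbk, hck⟩ := hlt k hk
            rcases he with he | he | he <;> rw [Sym2.eq_iff] at he <;>
              rcases he with ⟨h1, h2⟩ | ⟨h1, h2⟩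
            · exact Or.inl (by rw [h2, ← h1])
            · exact absurd h1 (hmax _ hak)
            · exact Or.inr (Or.inl (by rw [h2, ← h1]))
            · exact absurd h1 (hmax _ hbk)
            · exact Or.inr (Or.inr (by rw [h2, ← h1]))
            · exact absurd h1 (hmax _ hck)
        · have hgen : ∀ u : Fin n, (u : ℕ) < (v : ℕ) →
              (s(v, u) ∈ sc3Edges n a b c → (sc3Edges n a b c) s(v,u)) := fun _ _ h => h
          rintro (rfl | rfl | rfl)
          · exact ⟨Or.inr ⟨v, hv4, Or.inl rfl⟩, fun h => by have := congrArg Fin.val h; omega⟩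
          · exact ⟨Or.inr ⟨v, hv4, Or.inr (Or.inl rfl)⟩,
              fun h => by have := congrArg Fin.val h; omega⟩
          · exact ⟨Or.inr ⟨v, hv4, Or.inr (Or.inr rfl)⟩,
              fun h => by have := congrArg Fin.val h; omega⟩
      rw [hNS, Set.ncard_eq_three]
      exact ⟨a v, b v, c v, hab, hac, hbc, rfl⟩
  have hdegv : Odd (G.degree v) := by
    rw [← sc3_ncard_eq_degree, hcard]; decide
  have hodd2 := SimpleGraph.odd_card_odd_degree_vertices_ne G v hdegv
  have hpos : 0 < (Finset.filter (fun w => w ≠ v ∧ Odd (G.degree w)) Finset.univ).card :=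
    hodd2.pos
  obtain ⟨w, hw⟩ := Finset.card_pos.mp hpos
  rw [Finset.mem_filter] at hw
  obtain ⟨-, hwv, hwodd⟩ := hw
  refine ⟨⟨w, v, hwv, ?_, ?_⟩, ?_⟩
  · rw [sc3_ncard_eq_degree]; exact hwodd
  · rw [hcard]; decide
  · intro hall
    have := hall v
    rw [hcard] at this
    exact (by decide : ¬ Even 3) this
end
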